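/- arXiv:1607.05803 — 3 statements merged into one kernel-verified Lean document; each statement's English description precedes it below -/
import Mathlib

section
/- For ν, λ > 0 and s > 8λ³ν²/27, the cubic equation s = 2ζ²(λ + ζ/ν) has exactly one real solution ζ, and this solution satisfies ζ > 0. -/
lemma cubic_mono_aux (a b c : ℝ) (ha : 0 < a) (hb : 0 < b) (hc : 0 < c)
    (h : 2 * b ^ 2 * (a + b) = 2 * c ^ 2 * (a + c)) : b = c := by
  by_contra hne
  have hf : 0 < a * (b + c) + b ^ 2 + b * c + c ^ 2 :=
    add_pos (add_pos (add_pos (mul_pos ha (add_pos hb hc)) (pow_pos hb 2)) (mul_pos hb hc))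
      (pow_pos hc 2)
  rcases lt_or_gt_of_ne hne with hlt | hlt
  · nlinarith [mul_pos (sub_pos.mpr hlt) hf]
  · nlinarith [mul_pos (sub_pos.mpr hlt) hf]


theorem dual_cubic_unique_root (ν lam s : ℝ) (hν : 0 < ν) (hlam : 0 < lam)
    (hs : 8 * lam ^ 3 * ν ^ 2 / 27 < s) :
    (∃! ζ : ℝ, s = 2 * ζ ^ 2 * (lam + ζ / ν)) ∧
    (∀ ζ : ℝ, s = 2 * ζ ^ 2 * (lam + ζ / ν) → 0 < ζ) := by
  have hν' : ν ≠ 0 := ne_of_gt hν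
  have hspos : 0 < s := lt_trans (by positivity) hs
  -- positivity of any root
  have hpos : ∀ ζ : ℝ, s = 2 * ζ ^ 2 * (lam + ζ / ν) → 0 < ζ := by
    intro ζ h
    by_contra h0
    push_neg at h0
    have h' : s * ν = 2 * ζ ^ 2 * (lam * ν + ζ) := by
      field_simp at h
      nlinarith [h]
    have hkey : 0 ≤ (3 * ζ + 2 * lam * ν) ^ 2 * (2 * lam * ν - 6 * ζ) :=
      mul_nonneg (sq_nonneg _) (by nlinarith)
    nlinarith [mul_lt_mul_of_pos_right hs hν]
  -- existence
  have hcont : Continuous fun ζ : ℝ => 2 * ζ ^ 2 * (lam + ζ / ν) := by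
    continuity
  set M : ℝ := max 1 (s * ν) with hM
  have hM1 : (1:ℝ) ≤ M := le_max_left _ _
  have hM2 : s * ν ≤ M := le_max_right _ _
  have hMpos : 0 < M := lt_of_lt_of_le one_pos hM1
  have hfM : s ≤ 2 * M ^ 2 * (lam + M / ν) := by
    have hM3 : s * ν ≤ M ^ 3 := by
      nlinarith [mul_nonneg (mul_nonneg hMpos.le (sub_nonneg.mpr hM1)) (by linarith : (0:ℝ) ≤ M + 1)]
    have heq : 2 * M ^ 2 * (lam + M / ν) = 2 * M ^ 2 * (lam * ν + M) / ν := by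
      field_simp
    rw [heq, le_div_iff₀ hν]
    nlinarith [hM3, mul_pos hspos hν, mul_nonneg (mul_nonneg (sq_nonneg M) hlam.le) hν.le]
  have hmem : s ∈ Set.Icc (2 * (0:ℝ) ^ 2 * (lam + 0 / ν)) (2 * M ^ 2 * (lam + M / ν)) := by
    constructor
    · simp; linarith
    · exact hfM
  obtain ⟨ζ₀, _, hζ₀⟩ := intermediate_value_Icc (le_of_lt hMpos) hcont.continuousOn hmem
  refine ⟨⟨ζ₀, hζ₀.symm, ?_⟩, hpos⟩
  intro y hy
  have hy0 : 0 < y := hpos y hy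
  have hζ₀0 : 0 < ζ₀ := hpos ζ₀ hζ₀.symm
  have h1 : s * ν = 2 * y ^ 2 * (lam * ν + y) := by
    field_simp at hy; nlinarith [hy]
  have h2 : s * ν = 2 * ζ₀ ^ 2 * (lam * ν + ζ₀) := by
    have := hζ₀.symm
    field_simp at this; nlinarith [this]
  exact cubic_mono_aux (lam * ν) y ζ₀ (mul_pos hlam hν) hy0 hζ₀0 (by linarith)
end

section
/- For ν, λ > 0 and 0 < s < 8λ³ν²/27, the cubic equation s = 2ζ²(λ + ζ/ν) has exactly three distinct real solutions ζ₁ > ζ₂ > ζ₃, and they satisfy ζ₁ > 0 > ζ₂ > -2νλ/3 > ζ₃ > -νλ. -/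
/-!
With `a = νλ` and `t = sν/2` the equation reads `ζ²(ζ + a) = t`. The left side vanishes at `-a`
and `0`, equals its local maximum `4a³/27` at `-2a/3` and tends to `∞`, so for `0 < t < 4a³/27`
the intermediate value theorem gives a root in each of `(-a, -2a/3)`, `(-2a/3, 0)`, `(0, ∞)`.
There are no others: three distinct roots of a monic cubic sum to minus its quadratic coefficient,
so a fourth root would coincide with one of them.
-/

open Set

section MonicCubic

variable {R : Type*} [CommRing R] [IsDomain R] {b c d x y z w : R}

theorem monic_cubic_quadratic_eq_zero_of_roots (hxy : x ≠ y)
    (hx : x ^ 3 + b * x ^ 2 + c * x + d = 0) (hy : y ^ 3 + b * y ^ 2 + c * y + d = 0) :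
    x ^ 2 + x * y + y ^ 2 + b * (x + y) + c = 0 := by
  have h : (x - y) * (x ^ 2 + x * y + y ^ 2 + b * (x + y) + c) = 0 := by
    linear_combination hx - hy
  exact (mul_eq_zero.1 h).resolve_left (sub_ne_zero.2 hxy)

theorem monic_cubic_sum_roots (hxy : x ≠ y) (hxz : x ≠ z) (hyz : y ≠ z)
    (hx : x ^ 3 + b * x ^ 2 + c * x + d = 0) (hy : y ^ 3 + b * y ^ 2 + c * y + d = 0)
    (hz : z ^ 3 + b * z ^ 2 + c * z + d = 0) :
    x + y + z = -b := by
  have h : (y - z) * (x + y + z + b) = 0 := by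
    linear_combination monic_cubic_quadratic_eq_zero_of_roots hxy hx hy -
      monic_cubic_quadratic_eq_zero_of_roots hxz hx hz
  linear_combination (mul_eq_zero.1 h).resolve_left (sub_ne_zero.2 hyz)

theorem monic_cubic_eq_of_three_roots (hxy : x ≠ y) (hxz : x ≠ z) (hyz : y ≠ z)
    (hx : x ^ 3 + b * x ^ 2 + c * x + d = 0) (hy : y ^ 3 + b * y ^ 2 + c * y + d = 0)
    (hz : z ^ 3 + b * z ^ 2 + c * z + d = 0) (hw : w ^ 3 + b * w ^ 2 + c * w + d = 0) :
    w = x ∨ w = y ∨ w = z := by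
  by_contra! hne
  obtain ⟨hwx, hwy, hwz⟩ := hne
  have := monic_cubic_sum_roots hwy hwz hyz hw hy hz
  exact hwx (by linear_combination this - monic_cubic_sum_roots hxy hxz hyz hx hy hz)

end MonicCubic

theorem exists_three_roots_sq_mul_add_eq {a t : ℝ} (ht0 : 0 < t) (ht : t < 4 * a ^ 3 / 27) :
    ∃ x y z : ℝ, 0 < x ∧ -2 * a / 3 < y ∧ y < 0 ∧ -a < z ∧ z < -2 * a / 3 ∧
      x ^ 2 * (x + a) = t ∧ y ^ 2 * (y + a) = t ∧ z ^ 2 * (z + a) = t := by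
  have ha : 0 < a := (Odd.pow_pos_iff (by decide)).1 (by linarith : 0 < a ^ 3)
  set f : ℝ → ℝ := fun x ↦ x ^ 2 * (x + a)
  have hf : Continuous f := by fun_prop
  have hf_neg : f (-a) = 0 := by simp [f]
  have hf_max : f (-2 * a / 3) = 4 * a ^ 3 / 27 := by simp only [f]; ring
  have hf_zero : f 0 = 0 := by simp [f]
  have hf_large : t < f (t + 1) := by simp only [f]; nlinarith
  obtain ⟨x, ⟨hx0, -⟩, hx⟩ :=
    intermediate_value_Ioo (by linarith) hf.continuousOn
      (show t ∈ Ioo (f 0) (f (t + 1)) by rw [hf_zero]; exact ⟨ht0, hf_large⟩)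
  obtain ⟨y, ⟨hy1, hy2⟩, hy⟩ :=
    intermediate_value_Ioo' (by linarith) hf.continuousOn
      (show t ∈ Ioo (f 0) (f (-2 * a / 3)) by rw [hf_zero, hf_max]; exact ⟨ht0, ht⟩)
  obtain ⟨z, ⟨hz1, hz2⟩, hz⟩ :=
    intermediate_value_Ioo (by linarith) hf.continuousOn
      (show t ∈ Ioo (f (-a)) (f (-2 * a / 3)) by rw [hf_neg, hf_max]; exact ⟨ht0, ht⟩)
  exact ⟨x, y, z, hx0, hy1, hy2, hz1, hz2, hx, hy, hz⟩

theorem eq_two_mul_sq_mul_add_div_iff {ν lam s ζ : ℝ} (hν : ν ≠ 0) :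
    s = 2 * ζ ^ 2 * (lam + ζ / ν) ↔ ζ ^ 2 * (ζ + ν * lam) = s * ν / 2 := by
  rw [add_div' _ _ _ hν, mul_div_assoc', eq_div_iff hν]
  constructor
  · intro h; linear_combination (-1 / 2 : ℝ) * h
  · intro h; linear_combination -2 * h

theorem dual_cubic_three_roots_general (ν lam s : ℝ) (hν : 0 < ν)
    (hs0 : 0 < s) (hs : s < 8 * lam ^ 3 * ν ^ 2 / 27) :
    ∃ ζ₁ ζ₂ ζ₃ : ℝ,
      ζ₁ > 0 ∧ 0 > ζ₂ ∧ ζ₂ > -2 * ν * lam / 3 ∧ -2 * ν * lam / 3 > ζ₃ ∧ ζ₃ > -ν * lam ∧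
      s = 2 * ζ₁ ^ 2 * (lam + ζ₁ / ν) ∧
      s = 2 * ζ₂ ^ 2 * (lam + ζ₂ / ν) ∧
      s = 2 * ζ₃ ^ 2 * (lam + ζ₃ / ν) ∧
      (∀ ζ : ℝ, s = 2 * ζ ^ 2 * (lam + ζ / ν) → ζ = ζ₁ ∨ ζ = ζ₂ ∨ ζ = ζ₃) := by
  have hroot (ζ : ℝ) := eq_two_mul_sq_mul_add_div_iff (lam := lam) (s := s) (ζ := ζ) hν.ne'
  have ht : s * ν / 2 < 4 * (ν * lam) ^ 3 / 27 := by nlinarith [mul_lt_mul_of_pos_right hs hν]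
  obtain ⟨ζ₁, ζ₂, ζ₃, h₁, h₂, h₂', h₃, h₃', e₁, e₂, e₃⟩ :=
    exists_three_roots_sq_mul_add_eq (by positivity) ht
  have hmid : -2 * ν * lam / 3 = -2 * (ν * lam) / 3 := by ring
  refine ⟨ζ₁, ζ₂, ζ₃, h₁, h₂', by linarith, by linarith, by linarith,
    (hroot ζ₁).2 e₁, (hroot ζ₂).2 e₂, (hroot ζ₃).2 e₃, fun ζ hζ ↦ ?_⟩
  refine monic_cubic_eq_of_three_roots (b := ν * lam) (c := 0) (d := -(s * ν / 2))
    (by linarith) (by linarith) (by linarith) ?_ ?_ ?_ ?_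
  · linear_combination e₁
  · linear_combination e₂
  · linear_combination e₃
  · linear_combination (hroot ζ).1 hζ

theorem dual_cubic_three_roots (ν lam s : ℝ) (hν : 0 < ν) (hlam : 0 < lam)
    (hs0 : 0 < s) (hs : s < 8 * lam ^ 3 * ν ^ 2 / 27) :
    ∃ ζ₁ ζ₂ ζ₃ : ℝ,
      ζ₁ > 0 ∧ 0 > ζ₂ ∧ ζ₂ > -2 * ν * lam / 3 ∧ -2 * ν * lam / 3 > ζ₃ ∧ ζ₃ > -ν * lam ∧
      s = 2 * ζ₁ ^ 2 * (lam + ζ₁ / ν) ∧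
      s = 2 * ζ₂ ^ 2 * (lam + ζ₂ / ν) ∧
      s = 2 * ζ₃ ^ 2 * (lam + ζ₃ / ν) ∧
      (∀ ζ : ℝ, s = 2 * ζ ^ 2 * (lam + ζ / ν) → ζ = ζ₁ ∨ ζ = ζ₂ ∨ ζ = ζ₃) :=
  dual_cubic_three_roots_general ν lam s hν hs0 hs
end

section
/- Let ν, λ > 0 and suppose |σ|² > 8λ³ν²/27 for a fixed σ ∈ ℝⁿ. Then the unique positive root ζ̄ of |σ|² = 2ζ²(λ + ζ/ν) is the global maximizer of h(ζ) = −(1/2)(|σ|²/ζ + 2λζ + ζ²/ν) over ζ ∈ (0, ∞). -/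
theorem positive_root_global_maximizer (n : ℕ) (ν lam : ℝ)
    (hν : 0 < ν) (hlam : 0 < lam) (σ : EuclideanSpace ℝ (Fin n))
    (hσ : 8 * lam ^ 3 * ν ^ 2 / 27 < ‖σ‖ ^ 2)
    (h : ℝ → ℝ)
    (hh : ∀ ζ, h ζ = -(1 / 2) * (‖σ‖ ^ 2 / ζ + 2 * lam * ζ + ζ ^ 2 / ν))
    (ζ : ℝ) (hζpos : 0 < ζ) (hζ : ‖σ‖ ^ 2 = 2 * ζ ^ 2 * (lam + ζ / ν)) :
    ∀ z : ℝ, 0 < z → h z ≤ h ζ := by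
  intro z hz
  rw [hh, hh, hζ]
  have hzne : z ≠ 0 := hz.ne'
  have hζne : ζ ≠ 0 := hζpos.ne'
  have hνne : ν ≠ 0 := hν.ne'
  have h2 : ((2 * ζ ^ 2 * (lam + ζ / ν)) / z + 2 * lam * z + z ^ 2 / ν)
      - ((2 * ζ ^ 2 * (lam + ζ / ν)) / ζ + 2 * lam * ζ + ζ ^ 2 / ν)
      = (z - ζ) ^ 2 * (2 * lam + (z + 2 * ζ) / ν) / z := by
    field_simp
    ring
  have h3 : 0 ≤ (z - ζ) ^ 2 * (2 * lam + (z + 2 * ζ) / ν) / z := by positivity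
  nlinarith [h2, h3]
end
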